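/- arXiv:1406.6102 — 4 statements merged into one kernel-verified Lean document; each statement's English description precedes it below -/
import Mathlib

section
/- Let A be a set of n atoms, 0 < k < n, S ⊆ A with |S| = k, and suppose each pure rule a ← not b (a ≠ b) is included independently with probability p = c₁/n and each contradiction rule a ← not a is included independently with probability d = c₂/n. Then the probability that S is an answer set of the random program equals q^{(n-k)(n-k-1)} · (1 - q^{n-k})^k · (1 - d)^{n-k}, where q = 1 - p. -/
open MeasureTheory ProbabilityTheory
open scoped ENNReal

lemma group_indep {A Ω : Type*} [MeasurableSpace Ω] [DecidableEq A] {μ : Measure Ω}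
    [IsProbabilityMeasure μ]
    {E : A × A → Set Ω} (hmeas : ∀ r, MeasurableSet (E r))
    (hindep : iIndepSet E μ) :
    iIndep (fun a : A => MeasurableSpace.generateFrom
      {t | ∃ T : Finset A, t = ⋂ b ∈ T, E (a, b)}) μ := by
  have key : ∀ (a : A) (T : Finset A), μ (⋂ b ∈ T, E (a, b)) = ∏ b ∈ T, μ (E (a, b)) := by
    intro a T
    have himg : (⋂ b ∈ T, E (a, b)) = ⋂ r ∈ T.image (fun b => (a, b)), E r := by
      ext ω; simp
    rw [himg, hindep.meas_biInter, Finset.prod_image]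
    intro x _ y _ h; simpa using h
  refine iIndepSets.iIndep
      (fun a => MeasurableSpace.generateFrom_le ?_)
      (fun a : A => {t | ∃ T : Finset A, t = ⋂ b ∈ T, E (a, b)})
      (fun a => ?_) (fun a => rfl) ?_
  · rintro t ⟨T, rfl⟩
    exact MeasurableSet.biInter (Finset.countable_toSet T) fun b _ => hmeas _
  · rintro t1 ⟨T1, rfl⟩ t2 ⟨T2, rfl⟩ _
    exact ⟨T1 ∪ T2, by ext ω; simp [Finset.mem_union, or_imp, forall_and]⟩
  · rw [iIndepSets_iff]
    intro s f hf
    choose T hTf using hf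
    set R : Finset (A × A) :=
      s.attach.biUnion (fun x => (T x.1 x.2).image (fun b => (x.1, b))) with hR
    have hset : (⋂ a ∈ s, f a) = ⋂ r ∈ R, E r := by
      ext ω
      simp only [Set.mem_iInter, hR, Finset.mem_biUnion, Finset.mem_attach, Finset.mem_image,
        true_and, Subtype.exists]
      constructor
      · rintro h r ⟨a, ha, b, hb, rfl⟩
        have := h a ha
        rw [hTf a ha] at this
        simp only [Set.mem_iInter] at this
        exact this b hb
      · intro h a ha
        rw [hTf a ha]
        simp only [Set.mem_iInter]
        intro b hb
        exact h (a, b) ⟨a, ha, b, hb, rfl⟩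
    rw [hset, hindep.meas_biInter, hR, Finset.prod_biUnion, ← Finset.prod_attach s (fun a => μ (f a))]
    · refine Finset.prod_congr rfl fun x _ => ?_
      rw [Finset.prod_image (by intro u _ v _ h; simpa using h), hTf x.1 x.2, key]
    · intro x _ y _ hxy
      simp only [Finset.disjoint_left, Finset.mem_image]
      rintro r ⟨b, _, rfl⟩ ⟨b', _, h⟩
      exact hxy (Subtype.ext (by simpa using (Prod.ext_iff.1 h).1.symm))

/-- Probability that a fixed set `S` of size `k` is an answer set of a random
negative two-literal program under the linear model `M_{N2}(c₁, c₂)`.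
The program of outcome `ω` consists of the rules `r = (a,b)` (meaning
`a ← not b`) with `ω ∈ E r`; these inclusion events are mutually independent,
a pure rule (`a ≠ b`) having probability `p = c₁/n` and a contradiction rule
(`a = b`) probability `d = c₂/n`.  `S` is an answer set of the program iff
`S = {a | ∃ b ∉ S, (a,b) ∈ program}`. -/
theorem prob_answer_set {A : Type*} [Fintype A] [DecidableEq A]
    {Ω : Type*} [MeasurableSpace Ω] (μ : Measure Ω) [IsProbabilityMeasure μ]
    (E : A × A → Set Ω) (hmeas : ∀ r, MeasurableSet (E r))
    (hindep : iIndepSet E μ)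
    (c₁ c₂ : ℝ) (hc₁ : 0 ≤ c₁) (hc₂ : 0 ≤ c₂) (hc : 0 < c₁ + c₂)
    (n : ℕ) (hn : n = Fintype.card A) (hnc : (max c₁ c₂ : ℝ) < n)
    (hp : ∀ a b : A, a ≠ b → μ (E (a, b)) = ENNReal.ofReal (c₁ / n))
    (hd : ∀ a : A, μ (E (a, a)) = ENNReal.ofReal (c₂ / n))
    (S : Finset A) (k : ℕ) (hk : S.card = k) (hk0 : 0 < k) (hkn : k < n) :
    μ {ω | (S : Set A) = {a | ∃ b, b ∉ S ∧ ω ∈ E (a, b)}} =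
      ENNReal.ofReal ((1 - c₁ / n) ^ ((n - k) * (n - k - 1)) *
        (1 - (1 - c₁ / n) ^ (n - k)) ^ k * (1 - c₂ / n) ^ (n - k)) := by
  classical
  have hn0 : 0 < (n : ℝ) := by
    have : 0 < n := lt_trans hk0 hkn
    exact_mod_cast this
  have hp0 : (0:ℝ) ≤ c₁ / n := div_nonneg hc₁ hn0.le
  have hp1 : c₁ / n ≤ 1 := by
    rw [div_le_one hn0]
    exact ((le_max_left c₁ c₂).trans_lt hnc).le
  have hd0 : (0:ℝ) ≤ c₂ / n := div_nonneg hc₂ hn0.le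
  have hd1 : c₂ / n ≤ 1 := by
    rw [div_le_one hn0]
    exact ((le_max_right c₁ c₂).trans_lt hnc).le
  set q : ℝ := 1 - c₁ / n with hq_def
  have hq0 : 0 ≤ q := by simp [hq_def]; linarith
  have hq1 : q ≤ 1 := by simp [hq_def]; linarith
  have hcard : (Sᶜ : Finset A).card = n - k := by
    rw [Finset.card_compl, hk, hn]
  -- the relevant union events
  set G : A → Set Ω := fun a => ⋃ b ∈ (Sᶜ : Finset A), E (a, b) with hG_def
  set F : A → Set Ω := fun a => if a ∈ S then G a else (G a)ᶜ with hF_def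
  have hmemG : ∀ a ω, ω ∈ G a ↔ ∃ b, b ∉ S ∧ ω ∈ E (a, b) := by
    intro a ω
    simp [hG_def, Finset.mem_compl]
  -- the event as an intersection
  have hev : {ω | (S : Set A) = {a | ∃ b, b ∉ S ∧ ω ∈ E (a, b)}} = ⋂ a, F a := by
    ext ω
    simp only [Set.mem_setOf_eq, Set.ext_iff, Finset.mem_coe, Set.mem_iInter]
    refine forall_congr' fun a => ?_
    by_cases ha : a ∈ S <;>
      simp [hF_def, ha, hmemG a ω]
  -- grouped independence
  have hgrp := group_indep hmeas hindep
  have hbase : ∀ a b : A, MeasurableSet[MeasurableSpace.generateFrom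
      {t | ∃ T : Finset A, t = ⋂ b ∈ T, E (a, b)}] (E (a, b)) := by
    intro a b
    exact MeasurableSpace.measurableSet_generateFrom ⟨{b}, by simp⟩
  have hFmeas : ∀ a : A, MeasurableSet[MeasurableSpace.generateFrom
      {t | ∃ T : Finset A, t = ⋂ b ∈ T, E (a, b)}] (F a) := by
    intro a
    have hGm : MeasurableSet[MeasurableSpace.generateFrom
        {t | ∃ T : Finset A, t = ⋂ b ∈ T, E (a, b)}] (G a) :=
      MeasurableSet.biUnion (Finset.countable_toSet _) fun b _ => hbase a b
    have hFa : F a = if a ∈ S then G a else (G a)ᶜ := rfl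
    rw [hFa]
    split_ifs with ha
    · exact hGm
    · exact hGm.compl
  have hprod : μ (⋂ a, F a) = ∏ a, μ (F a) := hgrp.meas_iInter hFmeas
  -- complement probabilities
  have hindep' := (iIndepSet_iff_iIndep E μ).1 hindep
  have hGmeas : ∀ a, MeasurableSet (G a) :=
    fun a => MeasurableSet.biUnion (Finset.countable_toSet _) fun b _ => hmeas _
  have hGc : ∀ a : A, μ ((G a)ᶜ) = ∏ b ∈ (Sᶜ : Finset A), (1 - μ (E (a, b))) := by
    intro a
    have h1 : (G a)ᶜ = ⋂ r ∈ (Sᶜ : Finset A).image (fun b => (a, b)), (E r)ᶜ := by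
      ext ω; simp [hG_def, Finset.mem_compl]
    rw [h1, hindep'.meas_biInter
      (fun r _ => (MeasurableSpace.measurableSet_generateFrom (Set.mem_singleton _)).compl),
      Finset.prod_image (by intro x _ y _ h; simpa using h)]
    exact Finset.prod_congr rfl fun b _ => prob_compl_eq_one_sub (hmeas _)
  -- value of each factor
  have h1p : (1 : ℝ≥0∞) - ENNReal.ofReal (c₁ / n) = ENNReal.ofReal q := by
    rw [hq_def, ENNReal.ofReal_sub 1 hp0, ENNReal.ofReal_one]
  have hGcS : ∀ a ∈ S, μ ((G a)ᶜ) = ENNReal.ofReal (q ^ (n - k)) := by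
    intro a ha
    rw [hGc a]
    have : ∀ b ∈ (Sᶜ : Finset A), (1 : ℝ≥0∞) - μ (E (a, b)) = ENNReal.ofReal q := by
      intro b hb
      rw [hp a b (by rintro rfl; exact (Finset.mem_compl.1 hb) ha), h1p]
    rw [Finset.prod_congr rfl this, Finset.prod_const, hcard, ENNReal.ofReal_pow hq0]
  have hGcSc : ∀ a ∈ (Sᶜ : Finset A),
      μ ((G a)ᶜ) = ENNReal.ofReal ((1 - c₂ / n) * q ^ (n - k - 1)) := by
    intro a ha
    rw [hGc a, ← Finset.mul_prod_erase _ _ ha, hd a]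
    have : ∀ b ∈ (Sᶜ : Finset A).erase a,
        (1 : ℝ≥0∞) - μ (E (a, b)) = ENNReal.ofReal q := by
      intro b hb
      rw [hp a b (fun h => (Finset.mem_erase.1 hb).1 h.symm), h1p]
    rw [Finset.prod_congr rfl this, Finset.prod_const, Finset.card_erase_of_mem ha, hcard,
      ENNReal.ofReal_mul (by linarith : (0:ℝ) ≤ 1 - c₂ / n), ENNReal.ofReal_pow hq0,
      ENNReal.ofReal_sub 1 hd0, ENNReal.ofReal_one]
  -- factors
  have hFS : ∀ a ∈ S, μ (F a) = ENNReal.ofReal (1 - q ^ (n - k)) := by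
    intro a ha
    have : F a = ((G a)ᶜ)ᶜ := by rw [hF_def]; simp [ha]
    rw [this, prob_compl_eq_one_sub (hGmeas a).compl, hGcS a ha,
      ENNReal.ofReal_sub 1 (by positivity), ENNReal.ofReal_one]
  have hFSc : ∀ a ∈ (Sᶜ : Finset A),
      μ (F a) = ENNReal.ofReal ((1 - c₂ / n) * q ^ (n - k - 1)) := by
    intro a ha
    have : F a = (G a)ᶜ := by rw [hF_def]; simp [Finset.mem_compl.1 ha]
    rw [this, hGcSc a ha]
  -- put it together
  have hqpow : (0:ℝ) ≤ 1 - q ^ (n - k) := by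
    have := pow_le_one₀ hq0 hq1 (n := n - k)
    linarith
  have hmul0 : (0:ℝ) ≤ (1 - c₂ / n) * q ^ (n - k - 1) :=
    mul_nonneg (by linarith) (pow_nonneg hq0 _)
  rw [hev, hprod, ← Finset.prod_mul_prod_compl S (fun a => μ (F a)),
    Finset.prod_congr rfl hFS, Finset.prod_congr rfl hFSc,
    Finset.prod_const, Finset.prod_const, hk, hcard,
    ← ENNReal.ofReal_pow hqpow, ← ENNReal.ofReal_pow hmul0,
    ← ENNReal.ofReal_mul (pow_nonneg hqpow k)]
  congr 1
  rw [mul_pow, ← pow_mul, Nat.mul_comm (n - k - 1) (n - k)]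
  ring
end

section
/- Under the linear model, the expected number of answer sets of size k (0 < k < n) equals C(n,k) · q^{(n-k)(n-k-1)} · (1 - q^{n-k})^k · (1-d)^{n-k}, where q = 1 - c₁/n and d = c₂/n, and the total expected number of answer sets equals the sum of these quantities over k = 1, …, n-1. -/
/-!
The event that `S` is an answer set is an intersection of row events: each `a ∈ S` needs some
edge `E (a, b)` with `b ∉ S`, each `a ∉ S` needs none. Row events are measurable with respect to
disjoint groups of the independent σ-algebras generated by the `E r`, so they are independent, and
with `q = 1 - p` the answer-set probability is `(1 - q^(n-k))^k · ((1 - d) q^(n-k-1))^(n-k)`, a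
function of `k = #S` alone. Linearity of expectation and the `C(n, k)` sets of each size finish.
-/
open MeasureTheory ProbabilityTheory MeasurableSpace Finset

namespace ProbabilityTheory

variable {ι κ Ω : Type*} {mΩ : MeasurableSpace Ω} {μ : Measure Ω}

lemma iIndep.measureReal_biInter {m : ι → MeasurableSpace Ω} (h : iIndep m μ) {S : Finset ι}
    {s : ι → Set Ω} (hs : ∀ i ∈ S, MeasurableSet[m i] (s i)) :
    μ.real (⋂ i ∈ S, s i) = ∏ i ∈ S, μ.real (s i) := by
  simp only [measureReal_def, h.meas_biInter hs, ENNReal.toReal_prod]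

lemma iIndepSet.measureReal_biInter_compl {f : ι → Set Ω} (h : iIndepSet f μ)
    (hf : ∀ i, MeasurableSet (f i)) (S : Finset ι) :
    μ.real (⋂ i ∈ S, (f i)ᶜ) = ∏ i ∈ S, (1 - μ.real (f i)) := by
  have := h.isProbabilityMeasure
  rw [((iIndepSet_iff_iIndep f μ).1 h).measureReal_biInter
    fun i _ ↦ (measurableSet_generateFrom (Set.mem_singleton _)).compl]
  exact prod_congr rfl fun i _ ↦ probReal_compl_eq_one_sub (hf i)

lemma iIndep.iSup_fiber {m : ι → MeasurableSpace Ω} (h_le : ∀ i, m i ≤ mΩ) (h : iIndep m μ)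
    (g : ι → κ) : iIndep (fun j ↦ ⨆ i ∈ g ⁻¹' {j}, m i) μ := by
  classical
  have := h.isProbabilityMeasure
  rw [iIndep_iff]
  intro t
  induction t using Finset.induction_on with
  | empty => simp
  | insert j t hj ih =>
    intro f hf
    have hrest : MeasurableSet[⨆ i ∈ g ⁻¹' t, m i] (⋂ j' ∈ t, f j') :=
      Finset.measurableSet_biInter t fun j' hj' ↦ by
        have hle : ⨆ i ∈ g ⁻¹' {j'}, m i ≤ ⨆ i ∈ g ⁻¹' t, m i :=
          biSup_mono fun i hi ↦ by simp_all
        exact hle _ (hf j' (mem_insert_of_mem hj'))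
    have hdisj : Disjoint (g ⁻¹' {j}) (g ⁻¹' t) :=
      (Set.disjoint_singleton_left.2 hj).preimage g
    rw [set_biInter_insert, prod_insert hj, ← ih fun j' hj' ↦ hf j' (mem_insert_of_mem hj')]
    exact (Indep_iff _ _ _).1 (indep_iSup_of_disjoint h_le h hdisj) _ _
      (hf j (mem_insert_self j t)) hrest

end ProbabilityTheory

section AnswerSets

variable {A Ω : Type*} [Fintype A] [DecidableEq A] {mΩ : MeasurableSpace Ω} {μ : Measure Ω}
  {E : A × A → Set Ω}

/-- `E (a, b)` is the event that the program contains the rule `a ← not b`. -/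
def answerSetEvent (E : A × A → Set Ω) (S : Finset A) : Set Ω :=
  {ω | (S : Set A) = {a | ∃ b, b ∉ S ∧ ω ∈ E (a, b)}}

def rowEvent (E : A × A → Set Ω) (S : Finset A) (a : A) : Set Ω :=
  if a ∈ S then ⋃ b ∈ Sᶜ, E (a, b) else ⋂ b ∈ Sᶜ, (E (a, b))ᶜ

lemma answerSetEvent_eq_iInter_rowEvent (E : A × A → Set Ω) (S : Finset A) :
    answerSetEvent E S = ⋂ a ∈ univ, rowEvent E S a := by
  ext ω
  simp only [answerSetEvent, rowEvent, Set.mem_ofPred_eq, Set.ext_iff, Set.mem_iInter,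
    mem_univ, forall_const, mem_coe]
  refine forall_congr' fun a ↦ ?_
  by_cases ha : a ∈ S <;> simp [ha]

lemma measurableSet_rowEvent (S : Finset A) (a : A) :
    MeasurableSet[⨆ r ∈ Prod.fst ⁻¹' {a}, generateFrom {E r}] (rowEvent E S a) := by
  have hE : ∀ b, MeasurableSet[⨆ r ∈ Prod.fst ⁻¹' {a}, generateFrom {E r}] (E (a, b)) := by
    intro b
    have hle : generateFrom {E (a, b)} ≤ ⨆ r ∈ Prod.fst ⁻¹' {a}, generateFrom {E r} :=
      le_iSup₂ (f := fun r (_ : r ∈ Prod.fst ⁻¹' {a}) ↦ generateFrom {E r}) (a, b) rfl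
    exact hle _ (measurableSet_generateFrom (Set.mem_singleton _))
  unfold rowEvent
  split_ifs
  · exact Finset.measurableSet_biUnion _ fun b _ ↦ hE b
  · exact Finset.measurableSet_biInter _ fun b _ ↦ (hE b).compl

lemma measurableSet_answerSetEvent (hmeas : ∀ r, MeasurableSet (E r)) (S : Finset A) :
    MeasurableSet (answerSetEvent E S) := by
  have hle : ∀ a, ⨆ r ∈ Prod.fst ⁻¹' {a}, generateFrom {E r} ≤ mΩ := fun a ↦
    iSup₂_le fun r _ ↦ generateFrom_le fun _ hs ↦ hs ▸ hmeas r
  rw [answerSetEvent_eq_iInter_rowEvent]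
  exact Finset.measurableSet_biInter _ fun a _ ↦ hle a _ (measurableSet_rowEvent S a)

lemma measureReal_answerSetEvent (hmeas : ∀ r, MeasurableSet (E r)) (hindep : iIndepSet E μ)
    (S : Finset A) :
    μ.real (answerSetEvent E S) =
      (∏ a ∈ S, (1 - ∏ b ∈ Sᶜ, (1 - μ.real (E (a, b))))) *
        ∏ a ∈ Sᶜ, ∏ b ∈ Sᶜ, (1 - μ.real (E (a, b))) := by
  have := hindep.isProbabilityMeasure
  have hrows : iIndep (fun a ↦ ⨆ r ∈ Prod.fst ⁻¹' {a}, generateFrom {E r}) μ :=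
    ((iIndepSet_iff_iIndep E μ).1 hindep).iSup_fiber
      (fun r ↦ generateFrom_le fun _ hs ↦ hs ▸ hmeas r) Prod.fst
  have hrow (a : A) (t : Finset A) :
      μ.real (⋂ b ∈ t, (E (a, b))ᶜ) = ∏ b ∈ t, (1 - μ.real (E (a, b))) :=
    (hindep.precomp (Prod.mk_right_injective a)).measureReal_biInter_compl (fun _ ↦ hmeas _) t
  rw [answerSetEvent_eq_iInter_rowEvent, hrows.measureReal_biInter
    fun a _ ↦ measurableSet_rowEvent S a, ← prod_mul_prod_compl S]
  congr 1
  · refine prod_congr rfl fun a ha ↦ ?_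
    have hmeasRow : MeasurableSet (⋂ b ∈ Sᶜ, (E (a, b))ᶜ) :=
      Finset.measurableSet_biInter _ fun b _ ↦ (hmeas _).compl
    rw [rowEvent, if_pos ha, ← hrow, ← probReal_compl_eq_one_sub hmeasRow]
    simp only [Set.compl_iInter, compl_compl]
  · exact prod_congr rfl fun a ha ↦ by rw [rowEvent, if_neg (mem_compl.1 ha), hrow]

def answerSetProb (p d : ℝ) (n k : ℕ) : ℝ :=
  (1 - p) ^ ((n - k) * (n - k - 1)) * (1 - (1 - p) ^ (n - k)) ^ k * (1 - d) ^ (n - k)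

lemma measureReal_answerSetEvent_of_uniform (hmeas : ∀ r, MeasurableSet (E r))
    (hindep : iIndepSet E μ) {p d : ℝ} (hp : ∀ a b, a ≠ b → μ.real (E (a, b)) = p)
    (hd : ∀ a, μ.real (E (a, a)) = d) (S : Finset A) :
    μ.real (answerSetEvent E S) = answerSetProb p d (Fintype.card A) #S := by
  have hin : ∀ a ∈ S, ∏ b ∈ Sᶜ, (1 - μ.real (E (a, b))) = (1 - p) ^ #Sᶜ := fun a ha ↦
    prod_eq_pow_card fun b hb ↦ by rw [hp a b (ne_of_mem_of_not_mem ha (mem_compl.1 hb))]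
  have hout : ∀ a ∈ Sᶜ, ∏ b ∈ Sᶜ, (1 - μ.real (E (a, b))) = (1 - d) * (1 - p) ^ (#Sᶜ - 1) := by
    intro a ha
    rw [← mul_prod_erase _ _ ha, hd, ← card_erase_of_mem ha]
    exact congrArg _ (prod_eq_pow_card fun b hb ↦ by rw [hp a b (ne_of_mem_erase hb).symm])
  rw [measureReal_answerSetEvent hmeas hindep, prod_congr rfl fun a ha ↦ by rw [hin a ha],
    prod_congr rfl hout, prod_const, prod_const, card_compl, answerSetProb, mul_pow, ← pow_mul]
  ring

lemma integral_ncard_answerSets [IsFiniteMeasure μ] (hmeas : ∀ r, MeasurableSet (E r))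
    (P : Finset A → Prop) [DecidablePred P] :
    ∫ ω, ({S : Finset A | P S ∧ ω ∈ answerSetEvent E S}.ncard : ℝ) ∂μ =
      ∑ S with P S, μ.real (answerSetEvent E S) := by
  classical
  have hcount (ω : Ω) : ({S : Finset A | P S ∧ ω ∈ answerSetEvent E S}.ncard : ℝ) =
      ∑ S with P S, (answerSetEvent E S).indicator 1 ω := by
    rw [← coe_filter_univ, Set.ncard_coe_finset, ← filter_filter, card_filter]
    push_cast
    exact sum_congr rfl fun S _ ↦ by simp [Set.indicator]
  simp_rw [hcount]
  rw [integral_finsetSum _ fun S _ ↦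
    (integrable_const 1).indicator (measurableSet_answerSetEvent hmeas S)]
  exact sum_congr rfl fun S _ ↦ integral_indicator_one (measurableSet_answerSetEvent hmeas S)

end AnswerSets

section CardinalitySums

variable {A M : Type*} [Fintype A] [AddCommMonoid M]

lemma sum_filter_card_eq (f : ℕ → M) (k : ℕ) :
    ∑ S : Finset A with #S = k, f #S = (Fintype.card A).choose k • f k := by
  rw [sum_congr rfl fun S hS ↦ by rw [(mem_filter.1 hS).2], sum_const, ← powerset_univ,
    ← powersetCard_eq_filter, card_powersetCard, card_univ]

lemma sum_filter_card_mem (f : ℕ → M) (t : Finset ℕ) :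
    ∑ S : Finset A with #S ∈ t, f #S = ∑ k ∈ t, (Fintype.card A).choose k • f k := by
  rw [← sum_fiberwise_of_maps_to (g := card) fun S hS ↦ (mem_filter.1 hS).2]
  refine sum_congr rfl fun k hk ↦ ?_
  rw [filter_filter, ← sum_filter_card_eq]
  exact sum_congr (filter_congr fun S _ ↦ ⟨And.right, fun h ↦ ⟨h ▸ hk, h⟩⟩) fun _ _ ↦ rfl

end CardinalitySums

theorem expected_number_of_answer_sets_general {A : Type*} [Fintype A] [DecidableEq A]
    {Ω : Type*} [MeasurableSpace Ω] (μ : Measure Ω) [IsProbabilityMeasure μ]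
    (E : A × A → Set Ω) (hmeas : ∀ r, MeasurableSet (E r))
    (hindep : iIndepSet E μ)
    (c₁ c₂ : ℝ) (hc₁ : 0 ≤ c₁) (hc₂ : 0 ≤ c₂)
    (n : ℕ) (hn : n = Fintype.card A)
    (hp : ∀ a b : A, a ≠ b → μ (E (a, b)) = ENNReal.ofReal (c₁ / n))
    (hd : ∀ a : A, μ (E (a, a)) = ENNReal.ofReal (c₂ / n)) :
    (∀ k : ℕ, 0 < k → k < n →
      ∫ ω, ((Set.ncard {S : Finset A | S.card = k ∧
          (S : Set A) = {a | ∃ b, b ∉ S ∧ ω ∈ E (a, b)}} : ℝ)) ∂μ =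
        (n.choose k : ℝ) * ((1 - c₁ / n) ^ ((n - k) * (n - k - 1)) *
          (1 - (1 - c₁ / n) ^ (n - k)) ^ k * (1 - c₂ / n) ^ (n - k))) ∧
    ∫ ω, ((Set.ncard {S : Finset A | 0 < S.card ∧ S.card < n ∧
          (S : Set A) = {a | ∃ b, b ∉ S ∧ ω ∈ E (a, b)}} : ℝ)) ∂μ =
      ∑ k ∈ Finset.Ioo 0 n, (n.choose k : ℝ) *
        ((1 - c₁ / n) ^ ((n - k) * (n - k - 1)) *
          (1 - (1 - c₁ / n) ^ (n - k)) ^ k * (1 - c₂ / n) ^ (n - k)) := by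
  subst hn
  have hprob (S : Finset A) : μ.real (answerSetEvent E S) =
      answerSetProb (c₁ / Fintype.card A) (c₂ / Fintype.card A) (Fintype.card A) #S := by
    refine measureReal_answerSetEvent_of_uniform hmeas hindep (fun a b hab ↦ ?_) (fun a ↦ ?_) S
    · rw [measureReal_def, hp a b hab, ENNReal.toReal_ofReal (by positivity)]
    · rw [measureReal_def, hd a, ENNReal.toReal_ofReal (by positivity)]
  have hexpect (P : Finset A → Prop) [DecidablePred P] :
      ∫ ω, ({S : Finset A | P S ∧ ω ∈ answerSetEvent E S}.ncard : ℝ) ∂μ =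
        ∑ S with P S, answerSetProb (c₁ / Fintype.card A) (c₂ / Fintype.card A)
          (Fintype.card A) #S :=
    (integral_ncard_answerSets hmeas P).trans (sum_congr rfl fun S _ ↦ hprob S)
  refine ⟨fun k _ _ ↦ ?_, ?_⟩
  · exact (hexpect _).trans (by rw [sum_filter_card_eq, nsmul_eq_mul]; rfl)
  · simp_rw [← and_assoc, ← Finset.mem_Ioo]
    exact (hexpect _).trans (by simp_rw [sum_filter_card_mem, nsmul_eq_mul]; rfl)

/-- Under the linear model `M_{N2}(c₁, c₂)`, the expected number of answer
sets of size `k` (`0 < k < n`) equals `C(n,k)·q^{(n-k)(n-k-1)}·(1-q^{n-k})^k·(1-d)^{n-k}`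
where `q = 1 - c₁/n` and `d = c₂/n`, and the total expected number of answer
sets (answer sets of size `0` or `n` do not occur for nonempty programs)
equals the sum of these quantities over `k = 1, …, n-1`. -/
theorem expected_number_of_answer_sets {A : Type*} [Fintype A] [DecidableEq A]
    {Ω : Type*} [MeasurableSpace Ω] (μ : Measure Ω) [IsProbabilityMeasure μ]
    (E : A × A → Set Ω) (hmeas : ∀ r, MeasurableSet (E r))
    (hindep : iIndepSet E μ)
    (c₁ c₂ : ℝ) (hc₁ : 0 ≤ c₁) (hc₂ : 0 ≤ c₂) (hc : 0 < c₁ + c₂)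
    (n : ℕ) (hn : n = Fintype.card A) (hnc : (max c₁ c₂ : ℝ) < n)
    (hp : ∀ a b : A, a ≠ b → μ (E (a, b)) = ENNReal.ofReal (c₁ / n))
    (hd : ∀ a : A, μ (E (a, a)) = ENNReal.ofReal (c₂ / n)) :
    (∀ k : ℕ, 0 < k → k < n →
      ∫ ω, ((Set.ncard {S : Finset A | S.card = k ∧
          (S : Set A) = {a | ∃ b, b ∉ S ∧ ω ∈ E (a, b)}} : ℝ)) ∂μ =
        (n.choose k : ℝ) * ((1 - c₁ / n) ^ ((n - k) * (n - k - 1)) *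
          (1 - (1 - c₁ / n) ^ (n - k)) ^ k * (1 - c₂ / n) ^ (n - k))) ∧
    ∫ ω, ((Set.ncard {S : Finset A | 0 < S.card ∧ S.card < n ∧
          (S : Set A) = {a | ∃ b, b ∉ S ∧ ω ∈ E (a, b)}} : ℝ)) ∂μ =
      ∑ k ∈ Finset.Ioo 0 n, (n.choose k : ℝ) *
        ((1 - c₁ / n) ^ ((n - k) * (n - k - 1)) *
          (1 - (1 - c₁ / n) ^ (n - k)) ^ k * (1 - c₂ / n) ^ (n - k)) :=
  expected_number_of_answer_sets_general μ E hmeas hindep c₁ c₂ hc₁ hc₂ n hn hp hd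
end

section
/- For all integers n > 0, 1 ≤ n! / (e^{-n} n^n √(2πn)) ≤ e/√(2π). -/
open Real

theorem stirling_bounds (n : ℕ) (hn : 0 < n) :
    1 ≤ (Nat.factorial n : ℝ) /
        (Real.exp (-(n : ℝ)) * (n : ℝ) ^ n * Real.sqrt (2 * π * n)) ∧
    (Nat.factorial n : ℝ) /
        (Real.exp (-(n : ℝ)) * (n : ℝ) ^ n * Real.sqrt (2 * π * n)) ≤
      Real.exp 1 / Real.sqrt (2 * π) := by
  have hπ : 0 < π := Real.pi_pos
  have hsπ : 0 < Real.sqrt π := Real.sqrt_pos.mpr hπ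
  have hn0 : (0:ℝ) < (n:ℝ) := by exact_mod_cast hn
  -- ratio equals stirlingSeq n / √π
  have hratio : (Nat.factorial n : ℝ) /
      (Real.exp (-(n : ℝ)) * (n : ℝ) ^ n * Real.sqrt (2 * π * n))
      = Stirling.stirlingSeq n / Real.sqrt π := by
    rw [Stirling.stirlingSeq]
    rw [show (2:ℝ) * π * n = π * (2 * n) by ring,
        Real.sqrt_mul hπ.le, div_pow, Real.exp_neg, ← Real.exp_nat_mul]
    have h1 : Real.exp ((n:ℝ) * 1) > 0 := Real.exp_pos _
    have h2 : (0:ℝ) < Real.sqrt (2 * n) := Real.sqrt_pos.mpr (by positivity)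
    field_simp
  rw [hratio]
  -- bounds on stirlingSeq n
  have hlow : Real.sqrt π ≤ Stirling.stirlingSeq n := by
    obtain ⟨m, rfl⟩ := Nat.exists_eq_succ_of_ne_zero hn.ne'
    have := Stirling.stirlingSeq'_antitone.le_of_tendsto
      ((Filter.tendsto_add_atTop_iff_nat 1).mpr Stirling.tendsto_stirlingSeq_sqrt_pi) m
    simpa using this
  have hhigh : Stirling.stirlingSeq n ≤ Real.exp 1 / Real.sqrt 2 := by
    obtain ⟨m, rfl⟩ := Nat.exists_eq_succ_of_ne_zero hn.ne'
    have := Stirling.stirlingSeq'_antitone (Nat.zero_le m)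
    simpa [Stirling.stirlingSeq_one] using this
  constructor
  · rw [le_div_iff₀ hsπ, one_mul]; exact hlow
  · rw [div_le_div_iff₀ hsπ (Real.sqrt_pos.mpr (by positivity))]
    calc Stirling.stirlingSeq n * Real.sqrt (2 * π)
        ≤ Real.exp 1 / Real.sqrt 2 * Real.sqrt (2 * π) := by
          apply mul_le_mul_of_nonneg_right hhigh (Real.sqrt_nonneg _)
      _ = Real.exp 1 * Real.sqrt π := by
          rw [Real.sqrt_mul (by norm_num)]
          field_simp
end

section
/- Fix c₁ > 0, c₂ ≥ 0, let α > 1 satisfy α ln α = c₁, set x₀ = (α-1)n/α, σ = √((α-1)n)/(α + c₁), and φ(x₀) defined by the linear-model formula. Then √(2π)·σ·φ(x₀) → α·e^{(c₁-c₂)/α}/(α + c₁) as n → ∞. -/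
open Real

/-- `q = 1 - c₁/n`. -/
noncomputable def qval (c₁ : ℝ) (n : ℕ) : ℝ := 1 - c₁ / n

/-- The function `φ(x)` from the linear model:
`φ(x) = √(n/(2π x(n-x))) · (n(1-q^{n-x})/x)^x · (n r q^{n-x}/(n-x))^{n-x}`
with `q = 1 - c₁/n`, `d = c₂/n`, `r = (1-d)/q`; real powers are `rpow`. -/
noncomputable def phi (c₁ c₂ : ℝ) (n : ℕ) (x : ℝ) : ℝ :=
  Real.sqrt ((n : ℝ) / (2 * π * x * ((n : ℝ) - x))) *
    ((n : ℝ) * (1 - qval c₁ n ^ ((n : ℝ) - x)) / x) ^ x *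
    ((n : ℝ) * ((1 - c₂ / n) / qval c₁ n) * qval c₁ n ^ ((n : ℝ) - x) / ((n : ℝ) - x)) ^
      ((n : ℝ) - x)

open Filter

noncomputable def ufun (c₁ α : ℝ) (n : ℕ) : ℝ :=
  Real.log α + ((n:ℝ)/α) * Real.log (1 - c₁/(n:ℝ))

noncomputable def a1fun (c₁ α : ℝ) (n : ℕ) : ℝ := -((Real.exp (ufun c₁ α n) - 1)/(α-1))

noncomputable def Ffun (c₁ c₂ α : ℝ) (n : ℕ) : ℝ :=
  (α-1)*(n:ℝ)/α * Real.log (1 + a1fun c₁ α n)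
  + (n:ℝ)/α * (Real.log α + Real.log (1 - c₂/(n:ℝ))
      + ((n:ℝ)/α - 1) * Real.log (1 - c₁/(n:ℝ)))

section helpers

lemma tendsto_of_abs_sub_le {f g : ℕ → ℝ} {L : ℝ}
    (h : ∀ᶠ n in atTop, |f n - L| ≤ g n) (hg : Tendsto g atTop (nhds 0)) :
    Tendsto f atTop (nhds L) := by
  rw [← tendsto_sub_nhds_zero_iff]
  exact squeeze_zero_norm' (by simpa using h) hg

lemma log_taylor1 {x : ℝ} (hx : |x| ≤ 1/2) : |Real.log (1 - x) + x| ≤ 2 * x ^ 2 := by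
  have h1 : |x| < 1 := lt_of_le_of_lt hx (by norm_num)
  have := Real.abs_log_sub_add_sum_range_le h1 1
  simp [Finset.sum_range_one] at this
  calc |Real.log (1 - x) + x| = |x + Real.log (1-x)| := by rw [add_comm]
    _ ≤ x^2 / (1 - |x|) := this
    _ ≤ x^2 / (1/2) := by
        apply div_le_div_of_nonneg_left (by positivity) (by norm_num) (by linarith)
    _ = 2 * x ^ 2 := by ring

lemma log_taylor2 {x : ℝ} (hx : |x| ≤ 1/2) :
    |Real.log (1 - x) + x + x ^ 2 / 2| ≤ 2 * |x| ^ 3 := by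
  have h1 : |x| < 1 := lt_of_le_of_lt hx (by norm_num)
  have := Real.abs_log_sub_add_sum_range_le h1 2
  have hsum : (∑ i ∈ Finset.range 2, x ^ (i + 1) / (i + 1)) = x + x^2/2 := by
    simp [Finset.sum_range_succ]; ring
  rw [hsum] at this
  calc |Real.log (1 - x) + x + x^2/2| = |x + x^2/2 + Real.log (1-x)| := by
        congr 1; ring
    _ ≤ |x|^3 / (1 - |x|) := this
    _ ≤ |x|^3 / (1/2) := by
        apply div_le_div_of_nonneg_left (by positivity) (by norm_num) (by linarith)
    _ = 2 * |x| ^ 3 := by ring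

lemma abs_le_half_eventually {a : ℕ → ℝ} (ha : Tendsto a atTop (nhds 0)) :
    ∀ᶠ n in atTop, |a n| ≤ 1/2 := by
  have h2 : ∀ᶠ y in nhds (0:ℝ), |y| ≤ 1/2 := by
    filter_upwards [Metric.ball_mem_nhds (0:ℝ) (show (0:ℝ) < 1/2 by norm_num)] with y hy
    rw [Metric.mem_ball, Real.dist_eq, sub_zero] at hy; linarith [abs_nonneg y]
  exact ha.eventually h2

lemma aux_a_zero {a : ℕ → ℝ} {A : ℝ}
    (h : Tendsto (fun n : ℕ => n * a n) atTop (nhds A)) : Tendsto a atTop (nhds 0) := by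
  have := tendsto_one_div_atTop_nhds_zero_nat.mul h
  rw [zero_mul] at this
  apply this.congr'
  filter_upwards [eventually_ge_atTop 1] with n hn
  have : (n:ℝ) ≠ 0 := by positivity
  field_simp

lemma lemLog1 {a : ℕ → ℝ} {A : ℝ}
    (h : Tendsto (fun n : ℕ => n * a n) atTop (nhds A)) :
    Tendsto (fun n : ℕ => n * Real.log (1 + a n)) atTop (nhds A) := by
  have ha := aux_a_zero h
  have hg : Tendsto (fun n : ℕ => 2 * (|(n:ℝ) * a n| * |a n|)) atTop (nhds 0) := by
    have := (h.abs.mul ha.abs).const_mul 2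
    simpa using this
  have hd : Tendsto (fun n : ℕ => (n:ℝ) * Real.log (1 + a n) - n * a n) atTop (nhds 0) := by
    apply squeeze_zero_norm' _ hg
    filter_upwards [abs_le_half_eventually ha] with n hn
    have hb := log_taylor1 (x := -(a n)) (by rwa [abs_neg])
    rw [sub_neg_eq_add] at hb
    have : ‖(n:ℝ) * Real.log (1 + a n) - n * a n‖ = (n:ℝ) * |Real.log (1 + a n) - a n| := by
      rw [Real.norm_eq_abs, ← mul_sub, abs_mul, Nat.abs_cast]
    rw [this]
    have h2 : |Real.log (1 + a n) - a n| ≤ 2 * (a n)^2 := by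
      have : Real.log (1 + a n) - a n = Real.log (1 + a n) + (-(a n)) := by ring
      rw [this]
      simpa using hb
    calc (n:ℝ) * |Real.log (1 + a n) - a n| ≤ (n:ℝ) * (2 * (a n)^2) := by
          exact mul_le_mul_of_nonneg_left h2 (Nat.cast_nonneg n)
      _ = 2 * (|(n:ℝ) * a n| * |a n|) := by
          rw [abs_mul, Nat.abs_cast, mul_assoc, abs_mul_abs_self]; ring
  have := hd.add h
  rw [zero_add] at this
  exact this.congr (fun n => by ring)

lemma lemExp1 {a : ℕ → ℝ} {A : ℝ}
    (h : Tendsto (fun n : ℕ => n * a n) atTop (nhds A)) :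
    Tendsto (fun n : ℕ => n * (Real.exp (a n) - 1)) atTop (nhds A) := by
  have ha := aux_a_zero h
  have hg : Tendsto (fun n : ℕ => |(n:ℝ) * a n| * |a n|) atTop (nhds 0) := by
    simpa using h.abs.mul ha.abs
  have hd : Tendsto (fun n : ℕ => (n:ℝ) * (Real.exp (a n) - 1) - n * a n) atTop (nhds 0) := by
    apply squeeze_zero_norm' _ hg
    filter_upwards [abs_le_half_eventually ha] with n hn
    have hb := Real.abs_exp_sub_one_sub_id_le (x := a n) (by linarith)
    have : ‖(n:ℝ) * (Real.exp (a n) - 1) - n * a n‖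
        = (n:ℝ) * |Real.exp (a n) - 1 - a n| := by
      rw [Real.norm_eq_abs, show (n:ℝ) * (Real.exp (a n) - 1) - n * a n
        = (n:ℝ) * (Real.exp (a n) - 1 - a n) by ring, abs_mul, Nat.abs_cast]
    rw [this]
    calc (n:ℝ) * |Real.exp (a n) - 1 - a n| ≤ (n:ℝ) * (a n)^2 :=
          mul_le_mul_of_nonneg_left hb (Nat.cast_nonneg n)
      _ = |(n:ℝ) * a n| * |a n| := by
          rw [abs_mul, Nat.abs_cast, mul_assoc, abs_mul_abs_self]; ring
  have := hd.add h
  rw [zero_add] at this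
  exact this.congr (fun n => by ring)

lemma key_g (c : ℝ) :
    Tendsto (fun n : ℕ => n * (c + n * Real.log (1 - c / n))) atTop (nhds (-(c^2)/2)) := by
  have hx : Tendsto (fun n : ℕ => c / (n:ℝ)) atTop (nhds 0) := tendsto_const_div_atTop_nhds_zero_nat c
  apply tendsto_of_abs_sub_le (g := fun n : ℕ => 2 * |c|^3 / n)
  · filter_upwards [abs_le_half_eventually hx, eventually_ge_atTop 1] with n hn hn1
    have hn0 : (n:ℝ) ≠ 0 := by positivity
    have hb := log_taylor2 (x := c / n) hn
    have key : (n:ℝ) * (c + n * Real.log (1 - c / n)) - -(c^2)/2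
        = (n:ℝ)^2 * (Real.log (1 - c/n) + c/n + (c/n)^2/2) := by
      field_simp; ring
    rw [key, abs_mul, abs_pow, Nat.abs_cast]
    calc (n:ℝ)^2 * |Real.log (1 - c/n) + c/n + (c/n)^2/2| ≤ (n:ℝ)^2 * (2 * |c/n|^3) :=
          mul_le_mul_of_nonneg_left hb (by positivity)
      _ = 2 * |c|^3 / n := by
          rw [abs_div, Nat.abs_cast, div_pow]; field_simp
  · have := (tendsto_one_div_atTop_nhds_zero_nat).const_mul (2 * |c|^3)
    simpa [div_eq_mul_inv, mul_assoc] using this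

end helpers

lemma nlog_one_sub_tendsto (c : ℝ) :
    Tendsto (fun n : ℕ => (n:ℝ) * Real.log (1 - c/(n:ℝ))) atTop (nhds (-c)) := by
  have h0 : Tendsto (fun n : ℕ => (n:ℝ) * (-(c/(n:ℝ)))) atTop (nhds (-c)) := by
    apply Tendsto.congr' _ tendsto_const_nhds
    filter_upwards [eventually_ge_atTop 1] with n hn
    have hn0 : (n:ℝ) ≠ 0 := by positivity
    field_simp
  exact (lemLog1 h0).congr (fun n => by rw [← sub_eq_add_neg])

lemma na1_tendsto (c₁ α : ℝ) (hα : 1 < α) (hαc : α * Real.log α = c₁) :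
    Tendsto (fun n : ℕ => (n:ℝ) * a1fun c₁ α n) atTop
      (nhds ((-(1/(α-1))) * ((1/α) * (-(c₁^2)/2)))) := by
  have hα0 : (0:ℝ) < α := by linarith
  have hlogα : Real.log α = c₁ / α := by
    rw [eq_div_iff hα0.ne']; linarith [mul_comm α (Real.log α), hαc]
  have h_nu : Tendsto (fun n : ℕ => (n:ℝ) * ufun c₁ α n) atTop
      (nhds ((1/α) * (-(c₁^2)/2))) := by
    apply Tendsto.congr _ ((key_g c₁).const_mul (1/α))
    intro n
    simp only [ufun]
    rw [hlogα]
    ring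
  exact ((lemExp1 h_nu).const_mul (-(1/(α-1)))).congr
    (fun n => by simp only [a1fun]; ring)

lemma Ffun_tendsto (c₁ c₂ α : ℝ) (hα : 1 < α) (hαc : α * Real.log α = c₁) :
    Tendsto (fun n : ℕ => Ffun c₁ c₂ α n) atTop (nhds ((c₁ - c₂)/α)) := by
  have hα0 : (0:ℝ) < α := by linarith
  have hα1 : (0:ℝ) < α - 1 := by linarith
  have hlogα : Real.log α = c₁ / α := by
    rw [eq_div_iff hα0.ne']; linarith [mul_comm α (Real.log α), hαc]
  have hlog1 := lemLog1 (na1_tendsto c₁ α hα hαc)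
  have hgq := key_g c₁
  have hc2 := nlog_one_sub_tendsto c₂
  have hc1 := nlog_one_sub_tendsto c₁
  have comb := ((hlog1.const_mul ((α-1)/α)).add
    ((hgq.const_mul (1/α^2)).add ((hc2.const_mul (1/α)).sub (hc1.const_mul (1/α)))))
  have heq : ∀ n : ℕ,
      ((α-1)/α) * ((n:ℝ) * Real.log (1 + a1fun c₁ α n))
        + ((1/α^2) * ((n:ℝ) * (c₁ + (n:ℝ) * Real.log (1 - c₁/(n:ℝ))))
          + ((1/α) * ((n:ℝ) * Real.log (1 - c₂/(n:ℝ)))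
            - (1/α) * ((n:ℝ) * Real.log (1 - c₁/(n:ℝ)))))
      = Ffun c₁ c₂ α n := by
    intro n
    simp only [Ffun]
    rw [hlogα]
    field_simp
    ring
  have := comb.congr heq
  convert this using 2
  field_simp
  ring

lemma main_eq (c₁ c₂ α : ℝ) (hc₁ : 0 < c₁) (hc₂ : 0 ≤ c₂) (hα : 1 < α) (n : ℕ)
    (hn1 : 1 ≤ n) (hq2 : c₁/(n:ℝ) ≤ 1/2) (hd2 : c₂/(n:ℝ) ≤ 1/2)
    (hb1 : 0 < 1 + a1fun c₁ α n) :
    Real.sqrt (2*π) * (Real.sqrt ((α-1)*(n:ℝ))/(α+c₁)) * phi c₁ c₂ n ((α-1)*(n:ℝ)/α)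
      = α/(α+c₁) * Real.exp (Ffun c₁ c₂ α n) := by
  have hα0 : (0:ℝ) < α := by linarith
  have hα1 : (0:ℝ) < α - 1 := by linarith
  have hn0 : (0:ℝ) < n := by exact_mod_cast Nat.lt_of_lt_of_le Nat.zero_lt_one hn1
  have hqpos : 0 < 1 - c₁/(n:ℝ) := by linarith
  have hdpos : 0 < 1 - c₂/(n:ℝ) := by linarith
  have hπ : (0:ℝ) < π := Real.pi_pos
  simp only [phi, qval, Ffun]
  have hsub : (n:ℝ) - (α-1)*(n:ℝ)/α = (n:ℝ)/α := by field_simp; ring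
  rw [hsub]
  -- Q = exp(u)/α
  have hQ : (1 - c₁/(n:ℝ)) ^ ((n:ℝ)/α) = Real.exp (ufun c₁ α n) / α := by
    rw [Real.rpow_def_of_pos hqpos]
    simp only [ufun]
    rw [Real.exp_add, Real.exp_log hα0, mul_comm ((n:ℝ)/α)]
    field_simp
  -- base1
  have hbase1 : (n:ℝ) * (1 - (1 - c₁/(n:ℝ)) ^ ((n:ℝ)/α)) / ((α-1)*(n:ℝ)/α)
      = 1 + a1fun c₁ α n := by
    rw [hQ]; simp only [a1fun]; field_simp; ring
  rw [hbase1]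
  have hpow1 : (1 + a1fun c₁ α n) ^ ((α-1)*(n:ℝ)/α)
      = Real.exp ((α-1)*(n:ℝ)/α * Real.log (1 + a1fun c₁ α n)) := by
    rw [Real.rpow_def_of_pos hb1, mul_comm]
  rw [hpow1]
  -- base2
  have hb2eq : (n:ℝ) * ((1 - c₂/(n:ℝ))/(1 - c₁/(n:ℝ))) * (1 - c₁/(n:ℝ)) ^ ((n:ℝ)/α)
        / ((n:ℝ)/α)
      = α * ((1 - c₂/(n:ℝ)) * (1 - c₁/(n:ℝ)) ^ ((n:ℝ)/α - 1)) := by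
    rw [Real.rpow_sub_one hqpos.ne']
    field_simp
  have hb2 : ((n:ℝ) * ((1 - c₂/(n:ℝ))/(1 - c₁/(n:ℝ))) * (1 - c₁/(n:ℝ)) ^ ((n:ℝ)/α)
        / ((n:ℝ)/α)) ^ ((n:ℝ)/α)
      = Real.exp ((n:ℝ)/α * (Real.log α + Real.log (1 - c₂/(n:ℝ))
          + ((n:ℝ)/α - 1) * Real.log (1 - c₁/(n:ℝ)))) := by
    rw [hb2eq, Real.rpow_def_of_pos (by positivity), mul_comm]
    congr 2
    rw [Real.log_mul hα0.ne' (by positivity), Real.log_mul hdpos.ne' (by positivity),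
      Real.log_rpow hqpos]
    ring
  rw [hb2]
  -- sqrt part
  have hS : (0:ℝ) < Real.sqrt ((α-1)*(n:ℝ)) := Real.sqrt_pos.mpr (by positivity)
  have h2π : (0:ℝ) < Real.sqrt (2*π) := Real.sqrt_pos.mpr (by positivity)
  have hsqrt : Real.sqrt (2*π) * (Real.sqrt ((α-1)*(n:ℝ))/(α+c₁)) *
      Real.sqrt ((n:ℝ)/(2*π*((α-1)*(n:ℝ)/α)*((n:ℝ)/α))) = α/(α+c₁) := by
    have harg : (n:ℝ)/(2*π*((α-1)*(n:ℝ)/α)*((n:ℝ)/α)) = α^2/(2*π*((α-1)*(n:ℝ))) := by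
      field_simp
    rw [harg, Real.sqrt_div (by positivity : (0:ℝ) ≤ α^2), Real.sqrt_sq hα0.le,
      Real.sqrt_mul (by positivity : (0:ℝ) ≤ 2*π)]
    field_simp
  rw [Real.exp_add, ← hsqrt]
  ring

theorem sqrt_two_pi_sigma_phi_x0_tendsto (c₁ c₂ α : ℝ) (hc₁ : 0 < c₁)
    (hc₂ : 0 ≤ c₂) (hα : 1 < α) (hαc : α * Real.log α = c₁) :
    Filter.Tendsto
      (fun n : ℕ =>
        Real.sqrt (2 * π) * (Real.sqrt ((α - 1) * n) / (α + c₁)) *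
          phi c₁ c₂ n ((α - 1) * n / α))
      Filter.atTop (nhds (α * Real.exp ((c₁ - c₂) / α) / (α + c₁))) := by
  have hexp : Filter.Tendsto (fun n : ℕ => Real.exp (Ffun c₁ c₂ α n)) atTop
      (nhds (Real.exp ((c₁ - c₂)/α))) :=
    (Real.continuous_exp.continuousAt.tendsto).comp (Ffun_tendsto c₁ c₂ α hα hαc)
  have hbase := hexp.const_mul (α/(α+c₁))
  rw [show α * Real.exp ((c₁ - c₂)/α) / (α + c₁)
    = α/(α+c₁) * Real.exp ((c₁-c₂)/α) from by ring]
  apply hbase.congr'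
  have ha1 := abs_le_half_eventually (aux_a_zero (na1_tendsto c₁ α hα hαc))
  filter_upwards [eventually_ge_atTop 1,
    abs_le_half_eventually (tendsto_const_div_atTop_nhds_zero_nat c₁),
    abs_le_half_eventually (tendsto_const_div_atTop_nhds_zero_nat c₂), ha1]
    with n hn1 hq2 hd2 ha1n
  have hq2' : c₁/(n:ℝ) ≤ 1/2 := le_trans (le_abs_self _) hq2
  have hd2' : c₂/(n:ℝ) ≤ 1/2 := le_trans (le_abs_self _) hd2
  have hb1 : 0 < 1 + a1fun c₁ α n := by
    have := (abs_le.mp ha1n).1; linarith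
  exact (main_eq c₁ c₂ α hc₁ hc₂ hα n hn1 hq2' hd2' hb1).symm
end
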